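/- arXiv:2407.09655 — 4 statements merged into one kernel-verified Lean document; each statement's English description precedes it below -/
import Mathlib

section
/- Fix k ∈ [N]. If π is uniformly distributed on S_N and ξ is uniformly distributed on the subgroup S_k = {σ ∈ S_N : σ(j) = j for all j > k}, independently of π, then the permutation π_{>k} ∘ ξ is uniformly distributed on S_N. Equivalently, the pushforward of the uniform probability measure on S_N × S_k under the map (π, ξ) ↦ π_{>k} ∘ ξ is the uniform probability measure on S_N. -/
/-- Embedding of `Fin (k+1)` into `Fin N` (where `k : Fin N`). -/
def emb {N : ℕ} (k : Fin N) (t : Fin (k.val + 1)) : Fin N :=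
  ⟨t.val, lt_of_lt_of_le t.isLt k.isLt⟩

/-- `Phi t = (N t_N)(N−1 t_{N−1})⋯(2 t_2)(1 t_1)`, the strictly monotone factorization map. -/
def Phi {N : ℕ} (t : ∀ k : Fin N, Fin (k.val + 1)) : Equiv.Perm (Fin N) :=
  ((List.finRange N).reverse.map fun k => Equiv.swap k (emb k (t k))).prod

instance {N : ℕ} : Nonempty (∀ k : Fin N, Fin (k.val + 1)) := ⟨fun _ => 0⟩

/-- `tof π` is the tuple `(t_1(π),…,t_N(π))` of the strictly monotone factorization of `π`
(well defined since `Phi` is bijective). -/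
noncomputable def tof {N : ℕ} (π : Equiv.Perm (Fin N)) : ∀ k : Fin N, Fin (k.val + 1) :=
  Function.invFun Phi π

/-- `ptail π k` is `π_{>k} = (N t_N)⋯(k+1 t_{k+1})`, the product of the factors with index `> k`. -/
noncomputable def ptail {N : ℕ} (π : Equiv.Perm (Fin N)) (k : Fin N) : Equiv.Perm (Fin N) :=
  (((List.finRange N).reverse.filter fun j => decide (k < j)).map
    fun j => Equiv.swap j (emb j (tof π j))).prod

instance {N : ℕ} (k : Fin N) :
    Nonempty {ξ : Equiv.Perm (Fin N) // ∀ j, k < j → ξ j = j} :=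
  ⟨⟨1, fun _ _ => rfl⟩⟩

/-!
The map `(π, ξ) ↦ (π_{>k} ξ, π_{>k}⁻¹ π)` is an involution of `S_N × S_k`: the element
`π_{>k}⁻¹ π = π_{≤k}` lies in `S_k`, and since `ξ ∈ S_k` factors with trivial upper factors,
`π_{>k} ξ` has the same factors `t_j`, `j > k`, as `π`. An involution preserves the uniform
measure, and the first coordinate of a uniform pair is uniform.
-/

namespace PMF

theorem map_equiv_uniformOfFintype {α : Type*} [Fintype α] [Nonempty α] (e : α ≃ α) :
    map e (uniformOfFintype α) = uniformOfFintype α := by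
  ext b
  rw [map_apply, tsum_eq_single (e.symm b) fun a ha => if_neg fun h => ha (by simp [h])]
  simp

theorem map_fst_uniformOfFintype {α β : Type*} [Fintype α] [Fintype β] [Nonempty α]
    [Nonempty β] : map Prod.fst (uniformOfFintype (α × β)) = uniformOfFintype α := by
  classical
  ext a
  simp only [map_apply, tsum_fintype, Fintype.sum_prod_type, uniformOfFintype_apply]
  rw [Finset.sum_comm]
  simp [ENNReal.mul_inv, mul_left_comm _ (Fintype.card α : ENNReal)⁻¹, ENNReal.mul_inv_cancel]

end PMF

section SwapProd

variable {N : ℕ}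

lemma emb_injective (k : Fin N) : Function.Injective (emb k) :=
  fun _ _ h => Fin.ext (congrArg (fun x : Fin N => x.val) h)

def swapProd (L : List (Fin N)) (t : ∀ k : Fin N, Fin (k.val + 1)) : Equiv.Perm (Fin N) :=
  (L.map fun j => Equiv.swap j (emb j (t j))).prod

variable {L : List (Fin N)} {t t' : ∀ k : Fin N, Fin (k.val + 1)}

lemma swapProd_cons (a : Fin N) (L : List (Fin N)) (t : ∀ k : Fin N, Fin (k.val + 1)) :
    swapProd (a :: L) t = Equiv.swap a (emb a (t a)) * swapProd L t :=
  List.prod_cons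

lemma swapProd_append (L₁ L₂ : List (Fin N)) (t : ∀ k : Fin N, Fin (k.val + 1)) :
    swapProd (L₁ ++ L₂) t = swapProd L₁ t * swapProd L₂ t := by
  simp [swapProd]

lemma swapProd_congr (h : ∀ j ∈ L, t j = t' j) : swapProd L t = swapProd L t' :=
  congrArg List.prod (List.map_congr_left fun j hj => by rw [h j hj])

lemma swapProd_last : swapProd L (fun j => Fin.last j) = 1 :=
  List.prod_eq_one fun _ hσ => by
    obtain ⟨j, -, rfl⟩ := List.mem_map.mp hσ
    exact Equiv.swap_self j

lemma swapProd_apply_of_forall_lt {x : Fin N} (h : ∀ j ∈ L, j < x) : swapProd L t x = x := by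
  induction L with
  | nil => rfl
  | cons a L ih =>
    have ha : a < x := h a List.mem_cons_self
    have hta : emb a (t a) < x := lt_of_le_of_lt (Nat.lt_succ_iff.mp (t a).isLt) ha
    rw [swapProd_cons, Equiv.Perm.mul_apply, ih fun j hj => h j (List.mem_cons_of_mem a hj),
      Equiv.swap_apply_of_ne_of_ne ha.ne' hta.ne']

lemma swapProd_cons_apply_self {a : Fin N} (h : ∀ j ∈ L, j < a) :
    swapProd (a :: L) t a = emb a (t a) := by
  rw [swapProd_cons, Equiv.Perm.mul_apply, swapProd_apply_of_forall_lt h, Equiv.swap_apply_left]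

/-- Reading a decreasing product of swaps `(j t_j)` from the left, the first factor is the only
one moving its index, which recovers `t_j` one index at a time. -/
lemma eqOn_of_swapProd_apply_eq (hL : L.Pairwise (· > ·))
    (h : ∀ x ∈ L, swapProd L t x = swapProd L t' x) : ∀ j ∈ L, t j = t' j := by
  induction L with
  | nil => simp
  | cons a L ih =>
    obtain ⟨ha, hL⟩ := List.pairwise_cons.mp hL
    have hta : t a = t' a := by
      have := h a List.mem_cons_self
      rwa [swapProd_cons_apply_self ha, swapProd_cons_apply_self ha,
        (emb_injective a).eq_iff] at this
    have htail : ∀ x ∈ L, swapProd L t x = swapProd L t' x := fun x hx => by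
      have := h x (List.mem_cons_of_mem a hx)
      rwa [swapProd_cons, swapProd_cons, hta, Equiv.Perm.mul_apply, Equiv.Perm.mul_apply,
        (Equiv.injective _).eq_iff] at this
    simpa [hta] using ih hL htail

end SwapProd

section Factorization

variable {N : ℕ}

lemma pairwise_gt_finRange_reverse : (List.finRange N).reverse.Pairwise (· > ·) :=
  List.pairwise_reverse.mpr (List.pairwise_lt_finRange N)

lemma Phi_eq_swapProd (t : ∀ k : Fin N, Fin (k.val + 1)) :
    Phi t = swapProd (List.finRange N).reverse t :=
  rfl

lemma Phi_injective : Function.Injective (Phi (N := N)) := fun t t' h =>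
  funext fun j => eqOn_of_swapProd_apply_eq pairwise_gt_finRange_reverse
    (fun x _ => by rw [← Phi_eq_swapProd, ← Phi_eq_swapProd, h]) j (by simp)

lemma Phi_bijective : Function.Bijective (Phi (N := N)) := by
  refine (Fintype.bijective_iff_injective_and_card Phi).mpr ⟨Phi_injective, ?_⟩
  simp only [Fintype.card_pi, Fintype.card_perm, Fintype.card_fin]
  rw [Fin.prod_univ_eq_prod_range (· + 1) N, Finset.prod_range_add_one_eq_factorial]

lemma Phi_tof (π : Equiv.Perm (Fin N)) : Phi (tof π) = π :=
  Function.rightInverse_invFun Phi_bijective.surjective π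

lemma tof_Phi (t : ∀ k : Fin N, Fin (k.val + 1)) : tof (Phi t) = t :=
  Function.leftInverse_invFun Phi_bijective.injective t

end Factorization

section Split

variable {N : ℕ} (k : Fin N)

def above : List (Fin N) :=
  (List.finRange N).reverse.filter fun j => decide (k < j)

def atMost : List (Fin N) :=
  (List.finRange N).reverse.filter fun j => !decide (k < j)

variable {k}

lemma mem_above {j : Fin N} : j ∈ above k ↔ k < j := by
  simp [above]

lemma not_lt_of_mem_atMost {j : Fin N} (hj : j ∈ atMost k) : ¬k < j := by
  simpa [atMost] using hj

lemma filter_lt_append_filter_not_lt {L : List (Fin N)} (hL : L.Pairwise (· > ·)) :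
    L.filter (fun j => decide (k < j)) ++ L.filter (fun j => !decide (k < j)) = L := by
  induction L with
  | nil => rfl
  | cons a L ih =>
    obtain ⟨ha, hL⟩ := List.pairwise_cons.mp hL
    by_cases hka : k < a
    · simp [hka, ih hL]
    · have hL_le : ∀ j ∈ L, ¬k < j := fun j hj hkj => hka (hkj.trans (ha j hj))
      have h_above : L.filter (fun j => decide (k < j)) = [] :=
        List.filter_eq_nil_iff.mpr fun j hj => by simpa using hL_le j hj
      have h_atMost : L.filter (fun j => !decide (k < j)) = L :=
        List.filter_eq_self.mpr fun j hj => by simpa using hL_le j hj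
      simp [hka, h_above, h_atMost]

lemma Phi_eq_above_mul_atMost (t : ∀ k : Fin N, Fin (k.val + 1)) :
    Phi t = swapProd (above k) t * swapProd (atMost k) t := by
  rw [← swapProd_append, above, atMost,
    filter_lt_append_filter_not_lt pairwise_gt_finRange_reverse, Phi_eq_swapProd]

lemma ptail_eq_swapProd (π : Equiv.Perm (Fin N)) : ptail π k = swapProd (above k) (tof π) :=
  rfl

lemma swapProd_atMost_apply_of_lt (t : ∀ k : Fin N, Fin (k.val + 1)) {x : Fin N} (hx : k < x) :
    swapProd (atMost k) t x = x :=
  swapProd_apply_of_forall_lt fun _ hj => lt_of_le_of_lt (not_lt.mp (not_lt_of_mem_atMost hj)) hx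

lemma ptail_inv_mul_eq (π : Equiv.Perm (Fin N)) :
    (ptail π k)⁻¹ * π = swapProd (atMost k) (tof π) := by
  rw [ptail_eq_swapProd, inv_mul_eq_iff_eq_mul, ← Phi_eq_above_mul_atMost, Phi_tof]

lemma ptail_inv_mul_apply_of_lt (π : Equiv.Perm (Fin N)) {x : Fin N} (hx : k < x) :
    ((ptail π k)⁻¹ * π) x = x := by
  rw [ptail_inv_mul_eq, swapProd_atMost_apply_of_lt _ hx]

lemma ptail_eq_one {h : Equiv.Perm (Fin N)} (hh : ∀ j, k < j → h j = j) : ptail h k = 1 := by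
  have hfix : ∀ x ∈ above k, ptail h k x = swapProd (above k) (fun j => Fin.last j) x := by
    intro x hx
    have hkx := mem_above.mp hx
    have := ptail_inv_mul_apply_of_lt h hkx
    rw [Equiv.Perm.mul_apply, hh x hkx, Equiv.Perm.inv_eq_iff_eq] at this
    rw [swapProd_last]
    exact this.symm
  rw [ptail_eq_swapProd, swapProd_congr (L := above k) (eqOn_of_swapProd_apply_eq
    (pairwise_gt_finRange_reverse.filter _) hfix), swapProd_last]

lemma ptail_ptail_mul (σ : Equiv.Perm (Fin N)) {h : Equiv.Perm (Fin N)}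
    (hh : ∀ j, k < j → h j = j) : ptail (ptail σ k * h) k = ptail σ k := by
  classical
  set u : ∀ j : Fin N, Fin (j.val + 1) := fun j => if k < j then tof σ j else tof h j
  have hu_above : swapProd (above k) u = ptail σ k :=
    swapProd_congr fun j hj => if_pos (mem_above.mp hj)
  have hu_atMost : swapProd (atMost k) u = swapProd (atMost k) (tof h) :=
    swapProd_congr fun j hj => if_neg (not_lt_of_mem_atMost hj)
  have hPhi : Phi u = ptail σ k * h := by
    rw [Phi_eq_above_mul_atMost (k := k), hu_above, hu_atMost, ← ptail_inv_mul_eq,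
      ptail_eq_one hh, inv_one, one_mul]
  rw [ptail_eq_swapProd, ← hPhi, tof_Phi, hu_above]

end Split

section Shuffle

variable {N : ℕ} (k : Fin N)

noncomputable def shuffle
    (p : Equiv.Perm (Fin N) × {ξ : Equiv.Perm (Fin N) // ∀ j, k < j → ξ j = j}) :
    Equiv.Perm (Fin N) × {ξ : Equiv.Perm (Fin N) // ∀ j, k < j → ξ j = j} :=
  (ptail p.1 k * p.2, ⟨(ptail p.1 k)⁻¹ * p.1, fun _ hx => ptail_inv_mul_apply_of_lt p.1 hx⟩)

lemma shuffle_involutive : Function.Involutive (shuffle k) := by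
  rintro ⟨π, ξ, hξ⟩
  have hp := ptail_ptail_mul π hξ
  ext1
  · simp [shuffle, hp]
  · ext1; simp [shuffle, hp]

end Shuffle

theorem stmt2_general {N : ℕ} (k : Fin N) :
    PMF.map
        (fun p : Equiv.Perm (Fin N) × {ξ : Equiv.Perm (Fin N) // ∀ j, k < j → ξ j = j} =>
          ptail p.1 k * (p.2 : Equiv.Perm (Fin N)))
        (PMF.uniformOfFintype _)
      = PMF.uniformOfFintype (Equiv.Perm (Fin N)) := by
  have hfst : (fun p : Equiv.Perm (Fin N) × {ξ : Equiv.Perm (Fin N) // ∀ j, k < j → ξ j = j} =>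
      ptail p.1 k * (p.2 : Equiv.Perm (Fin N))) = Prod.fst ∘ (shuffle_involutive k).toPerm :=
    rfl
  rw [hfst, ← PMF.map_comp, PMF.map_equiv_uniformOfFintype, PMF.map_fst_uniformOfFintype]

/-- Fix `k ∈ [N]`.  If `π` is uniform on `S_N` and `ξ` is uniform on the
subgroup `S_k = {σ : σ(j) = j for all j > k}`, independently of `π`, then `π_{>k} ∘ ξ` is
uniform on `S_N`: the pushforward of the uniform measure on `S_N × S_k` under
`(π, ξ) ↦ π_{>k} ∘ ξ` is the uniform measure on `S_N`. -/
theorem stmt2 {N : ℕ} (hN : 1 ≤ N) (k : Fin N) :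
    PMF.map
        (fun p : Equiv.Perm (Fin N) × {ξ : Equiv.Perm (Fin N) // ∀ j, k < j → ξ j = j} =>
          ptail p.1 k * (p.2 : Equiv.Perm (Fin N)))
        (PMF.uniformOfFintype _)
      = PMF.uniformOfFintype (Equiv.Perm (Fin N)) :=
  stmt2_general k
end

section
/- For every x ∈ [N] and every subset Y ⊆ [N], the operator norm satisfies ‖Π^{Y,x} ∘ P_x‖ ≤ √(|Y|/x). -/
open scoped Classical

/-- `T N = ∏_{k=1}^N [k]`, the index set of the database. -/
abbrev T (N : ℕ) := ∀ k : Fin N, Fin (k.val + 1)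

/-- The bounded operator on `ℓ²(ι)` (Euclidean space) associated with a matrix. -/
noncomputable def toCLM {ι : Type*} [Fintype ι] [DecidableEq ι] (M : Matrix ι ι ℂ) :
    EuclideanSpace ℂ ι →L[ℂ] EuclideanSpace ℂ ι :=
  LinearMap.toContinuousLinearMap (Matrix.toEuclideanLin M)

/-- The matrix of the orthogonal projection `P_x` on `ℓ²(T)`, given by
`(P_x f)(t) = (1/x) ∑_{s=1}^{x} f(t_1,…,t_{x−1}, s, t_{x+1},…,t_N)`. -/
noncomputable def PxT {N : ℕ} (x : Fin N) : Matrix (T N) (T N) ℂ := fun t t' =>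
  if ∀ j, j ≠ x → t j = t' j then ((x.val : ℂ) + 1)⁻¹ else 0

/-- The matrix of the coordinate projection `Π^{Y,x}` onto functions supported on
`{t : Φ(t)(x) ∈ Y}`. -/
noncomputable def PiYx {N : ℕ} (Y : Finset (Fin N)) (x : Fin N) : Matrix (T N) (T N) ℂ :=
  fun t t' => if t = t' ∧ Phi t x ∈ Y then 1 else 0

/-!
`P_x` averages over the fibres of the map forgetting the `x`-th coordinate, each of size `x + 1`.
On such a fibre `t ↦ Φ(t)(x)` is injective: the factors `(k t_k)` with `k < x` fix `x`, the
factor `(x t_x)` sends `x` to `t_x`, and the remaining factors do not depend on `t_x`. So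
`Π^{Y,x}` keeps at most `|Y|` points of each fibre, where `P_x f` equals the fibre average `a`;
by Cauchy–Schwarz `|a|² ≤ (x + 1)⁻¹ ∑_fibre |f|²`, and summing over fibres gives
`‖Π^{Y,x} P_x f‖² ≤ |Y| / (x + 1) ‖f‖²`.
-/

open Finset

lemma norm_inv_natCast_mul_sum_sq_le {α 𝕜 : Type*} [RCLike 𝕜] (s : Finset α) (f : α → 𝕜)
    {n : ℕ} (hs : #s ≤ n) :
    ‖(n : 𝕜)⁻¹ * ∑ a ∈ s, f a‖ ^ 2 ≤ (n : ℝ)⁻¹ * ∑ a ∈ s, ‖f a‖ ^ 2 := by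
  have hCS : ‖∑ a ∈ s, f a‖ ^ 2 ≤ n * ∑ a ∈ s, ‖f a‖ ^ 2 :=
    calc ‖∑ a ∈ s, f a‖ ^ 2 ≤ (∑ a ∈ s, ‖f a‖) ^ 2 := by gcongr; exact norm_sum_le _ _
      _ ≤ #s * ∑ a ∈ s, ‖f a‖ ^ 2 := sq_sum_le_card_mul_sum_sq
      _ ≤ n * ∑ a ∈ s, ‖f a‖ ^ 2 := by gcongr
  rcases n.eq_zero_or_pos with rfl | hn
  · simp
  rw [norm_mul, mul_pow, norm_inv, RCLike.norm_natCast]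
  calc (n : ℝ)⁻¹ ^ 2 * ‖∑ a ∈ s, f a‖ ^ 2 ≤ (n : ℝ)⁻¹ ^ 2 * (n * ∑ a ∈ s, ‖f a‖ ^ 2) := by
        gcongr
    _ = (n : ℝ)⁻¹ * ∑ a ∈ s, ‖f a‖ ^ 2 := by field_simp

lemma sum_ite_comp_eq_sum_card_fiber_mul {ι β : Type*} [Fintype ι] [Fintype β] [DecidableEq β]
    (π : ι → β) (p : ι → Prop) [DecidablePred p] (h : β → ℝ) :
    ∑ i, (if p i then h (π i) else 0) = ∑ b, #{i | π i = b ∧ p i} * h b := by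
  rw [← Finset.sum_filter, ← Finset.sum_fiberwise' _ π h]
  simp [Finset.filter_filter, and_comm]

section FiberAverage

variable {ι β : Type*} [Fintype ι] [DecidableEq ι]

lemma toCLM_apply (M : Matrix ι ι ℂ) (f : EuclideanSpace ℂ ι) (i : ι) :
    toCLM M f i = ∑ j, M i j * f j := rfl

lemma toCLM_diagonal_apply (d : ι → ℂ) (f : EuclideanSpace ℂ ι) (i : ι) :
    toCLM (Matrix.diagonal d) f i = d i * f i := by
  simp [toCLM_apply, Matrix.diagonal_apply]

noncomputable def fiberAverage [DecidableEq β] (π : ι → β) (n : ℕ) : Matrix ι ι ℂ :=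
  Matrix.of fun i j => if π i = π j then (n : ℂ)⁻¹ else 0

lemma toCLM_fiberAverage_apply [DecidableEq β] (π : ι → β) (n : ℕ) (f : EuclideanSpace ℂ ι)
    (i : ι) : toCLM (fiberAverage π n) f i = (n : ℂ)⁻¹ * ∑ j with π j = π i, f j := by
  simp [toCLM_apply, fiberAverage, Finset.sum_ite, Finset.mul_sum, eq_comm]

theorem norm_toCLM_diagonal_comp_fiberAverage_le [Fintype β] [DecidableEq β] (π : ι → β)
    (p : ι → Prop) [DecidablePred p] {n m : ℕ} (hn : ∀ b, #{i | π i = b} ≤ n)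
    (hm : ∀ b, #{i | π i = b ∧ p i} ≤ m) :
    ‖toCLM (Matrix.diagonal fun i => if p i then 1 else 0) ∘L toCLM (fiberAverage π n)‖
      ≤ √((m : ℝ) / n) := by
  refine ContinuousLinearMap.opNorm_le_bound _ (Real.sqrt_nonneg _) fun f => ?_
  set A : β → ℂ := fun b => (n : ℂ)⁻¹ * ∑ j with π j = b, f j
  have hsq : ‖(toCLM (Matrix.diagonal fun i => if p i then 1 else 0) ∘L
      toCLM (fiberAverage π n)) f‖ ^ 2 ≤ (m : ℝ) / n * ‖f‖ ^ 2 :=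
    calc _ = ∑ i, (if p i then ‖A (π i)‖ ^ 2 else 0) := by
          rw [EuclideanSpace.norm_sq_eq]
          refine Finset.sum_congr rfl fun i _ => ?_
          simp only [ContinuousLinearMap.comp_apply, toCLM_diagonal_apply,
            toCLM_fiberAverage_apply]
          split_ifs <;> simp [A]
      _ = ∑ b, #{i | π i = b ∧ p i} * ‖A b‖ ^ 2 :=
          sum_ite_comp_eq_sum_card_fiber_mul π p fun b => ‖A b‖ ^ 2
      _ ≤ ∑ b, m * ((n : ℝ)⁻¹ * ∑ j with π j = b, ‖f j‖ ^ 2) := by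
          gcongr with b
          · exact_mod_cast hm b
          · exact norm_inv_natCast_mul_sum_sq_le _ _ (hn b)
      _ = (m : ℝ) / n * ‖f‖ ^ 2 := by
          rw [EuclideanSpace.norm_sq_eq, ← Finset.sum_fiberwise univ π, Finset.mul_sum]
          simp_rw [div_eq_mul_inv, mul_assoc]
  rw [← Real.sqrt_sq (norm_nonneg f), ← Real.sqrt_mul (by positivity)]
  exact Real.le_sqrt_of_sq_le hsq

end FiberAverage

lemma Set.domRestrict_compl_singleton_eq_iff {α : Type*} {π : α → Type*} {a : α}
    {f g : ∀ a, π a} :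
    ({a}ᶜ : Set α).domRestrict f = ({a}ᶜ : Set α).domRestrict g ↔ ∀ b ≠ a, f b = g b := by
  simp [funext_iff, Set.domRestrict]

lemma injOn_eval_domRestrict_compl_singleton {α : Type*} {π : α → Type*} (a : α)
    (b : ∀ c : ({a}ᶜ : Set α), π c) :
    Set.InjOn (Function.eval a) {f : ∀ a, π a | ({a}ᶜ : Set α).domRestrict f = b} := by
  intro f hf g hg ha
  funext c
  by_cases hc : c = a
  · exact hc ▸ ha
  · exact Set.domRestrict_compl_singleton_eq_iff.1 (hf.trans hg.symm) c hc

lemma exists_Phi_apply_eq_tail (N : ℕ) (x : Fin N) : ∃ l : List (Fin N), (∀ k ∈ l, x < k) ∧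
    ∀ t : T N,
      Phi t x = (l.reverse.map fun k => Equiv.swap k (emb k (t k))).prod (emb x (t x)) := by
  obtain ⟨l₁, l₂, hsplit⟩ := List.append_of_mem (List.mem_finRange x)
  have hlt := List.pairwise_lt_finRange N
  rw [hsplit, List.pairwise_append, List.pairwise_cons] at hlt
  refine ⟨l₂, hlt.2.1.1, fun t => ?_⟩
  have hfix : (l₁.map fun k => Equiv.swap k (emb k (t k))).reverse.prod x = x := by
    refine MulAction.mem_stabilizer_iff.1
      (Subgroup.list_prod_mem (K := MulAction.stabilizer (Equiv.Perm (Fin N)) x) ?_)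
    simp only [List.mem_map, List.mem_reverse, forall_exists_index, and_imp]
    rintro _ k hk rfl
    have hkx : k < x := hlt.2.2 k hk x List.mem_cons_self
    refine Equiv.swap_apply_of_ne_of_ne hkx.ne' fun h => ?_
    have : (x : ℕ) ≤ k := by simpa [emb, Fin.ext_iff] using h ▸ Nat.lt_succ_iff.1 (t k).isLt
    omega
  simp [Phi, hsplit, List.prod_append, hfix]

lemma apply_eq_of_Phi_apply_eq {N : ℕ} {x : Fin N} {t t' : T N} (h : ∀ j ≠ x, t j = t' j)
    (hΦ : Phi t x = Phi t' x) : t x = t' x := by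
  obtain ⟨l, hl, hΦl⟩ := exists_Phi_apply_eq_tail N x
  have htail : (l.reverse.map fun k => Equiv.swap k (emb k (t k)))
      = l.reverse.map fun k => Equiv.swap k (emb k (t' k)) :=
    List.map_congr_left fun k hk => by rw [h k (hl k (List.mem_reverse.1 hk)).ne']
  rw [hΦl, hΦl, htail] at hΦ
  simpa [emb, Fin.ext_iff] using Equiv.injective _ hΦ

lemma injOn_Phi_apply_domRestrict_compl_singleton {N : ℕ} (x : Fin N)
    (b : ∀ j : ({x}ᶜ : Set (Fin N)), Fin (j.val.val + 1)) :
    Set.InjOn (fun t : T N => Phi t x) {t | ({x}ᶜ : Set (Fin N)).domRestrict t = b} :=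
  fun _ ht _ ht' hΦ => injOn_eval_domRestrict_compl_singleton x b ht ht'
    (apply_eq_of_Phi_apply_eq (Set.domRestrict_compl_singleton_eq_iff.1 (ht.trans ht'.symm)) hΦ)

theorem stmt12_general {N : ℕ} (x : Fin N) (Y : Finset (Fin N)) :
    ‖toCLM (PiYx Y x) ∘L toCLM (PxT x)‖
      ≤ Real.sqrt ((Y.card : ℝ) / ((x.val : ℝ) + 1)) := by
  have hPi : PiYx Y x = Matrix.diagonal fun t => if Phi t x ∈ Y then 1 else 0 := by
    ext t t'
    by_cases h : t = t' <;> simp [PiYx, h]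
  have hP : PxT x = fiberAverage ({x}ᶜ : Set (Fin N)).domRestrict (x.val + 1) := by
    ext t t'
    simp [PxT, fiberAverage, Set.domRestrict_compl_singleton_eq_iff]
  have hfib : ∀ b, #{t | ({x}ᶜ : Set (Fin N)).domRestrict t = b} ≤ x.val + 1 := fun b => by
    simpa using card_le_card_of_injOn (t := univ) (fun t : T N => t x)
      (fun _ _ => mem_coe.2 (mem_univ _))
      ((injOn_eval_domRestrict_compl_singleton x b).mono fun _ ht => (mem_filter.1 ht).2)
  have hY : ∀ b, #{t | ({x}ᶜ : Set (Fin N)).domRestrict t = b ∧ Phi t x ∈ Y} ≤ #Y := fun b =>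
    card_le_card_of_injOn _ (fun _ ht => (mem_filter.1 ht).2.2)
      ((injOn_Phi_apply_domRestrict_compl_singleton x b).mono fun _ ht => (mem_filter.1 ht).2.1)
  rw [hPi, hP]
  simpa using norm_toCLM_diagonal_comp_fiberAverage_le _ _ hfib hY

/-- For every `x ∈ [N]` and every `Y ⊆ [N]`, the operator norm satisfies
`‖Π^{Y,x} ∘ P_x‖ ≤ √(|Y|/x)`. -/
theorem stmt12 {N : ℕ} (hN : 1 ≤ N) (x : Fin N) (Y : Finset (Fin N)) :
    ‖toCLM (PiYx Y x) ∘L toCLM (PxT x)‖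
      ≤ Real.sqrt ((Y.card : ℝ) / ((x.val : ℝ) + 1)) :=
  stmt12_general x Y
end

section
/- Fix x ∈ [N]. (a) If γ ∈ S_N satisfies γ(x) = x, then (I ⊗ R^γ) commutes with O^x, i.e., [I ⊗ R^γ, O^x] = 0. (b) The commutator norms satisfy ‖[I ⊗ W^{(2)}, O^x]‖ ≤ 4/N and ‖[I ⊗ W^{(3)}, O^x]‖ ≤ 6/N. -/
open scoped Classical
open Matrix

/-- The matrix of the unitary `R^σ` on `ℓ²(S_N)`, `R^σ|π⟩ = |πσ⁻¹⟩`. -/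
noncomputable def Rmat {N : ℕ} (σ : Equiv.Perm (Fin N)) :
    Matrix (Equiv.Perm (Fin N)) (Equiv.Perm (Fin N)) ℂ := fun ρ π =>
  if ρ = π * σ⁻¹ then 1 else 0

/-- `W^{(ℓ)}`, the average of `R^γ` over all `ℓ`-cycles `γ ∈ S_N`. -/
noncomputable def Wmat {N : ℕ} (l : ℕ) :
    Matrix (Equiv.Perm (Fin N)) (Equiv.Perm (Fin N)) ℂ :=
  (((Finset.univ.filter fun γ : Equiv.Perm (Fin N) =>
        γ.IsCycle ∧ γ.support.card = l).card : ℂ))⁻¹ •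
    ∑ γ ∈ Finset.univ.filter
        (fun γ : Equiv.Perm (Fin N) => γ.IsCycle ∧ γ.support.card = l),
      Rmat γ

/-- Bitwise XOR on `Fin (2^n)`, coming from the identification of `[N] = [2^n]`
with `{0,1}^n` via binary expansion. -/
def xorFin {n : ℕ} (a b : Fin (2 ^ n)) : Fin (2 ^ n) :=
  ⟨a.val ^^^ b.val, Nat.xor_lt_two_pow a.isLt b.isLt⟩

/-- The matrix of the unitary `O^x` on `ℂ^N ⊗ ℓ²(S_N)` determined by
`O^x (|y⟩ ⊗ |π⟩) = |y ⊕ π(x)⟩ ⊗ |π⟩` (with `N = 2^n`). -/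
noncomputable def OxM {n : ℕ} (x : Fin (2 ^ n)) :
    Matrix (Fin (2 ^ n) × Equiv.Perm (Fin (2 ^ n))) (Fin (2 ^ n) × Equiv.Perm (Fin (2 ^ n))) ℂ :=
  fun p q => if p.2 = q.2 ∧ p.1 = xorFin q.1 (q.2 x) then 1 else 0

/-!
`I ⊗ R^γ` and `O^x` are the permutation matrices of `(y, π) ↦ (y, πγ)` and
`(y, π) ↦ (y ⊕ π(x), π)`, and these two permutations commute as soon as `γ` fixes `x`.
In the average `W^{(ℓ)}` only the `ℓ`-cycles moving `x` therefore contribute to the commutator,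
each with a commutator of norm at most `2`. Since the `ℓ`-cycles form a conjugacy class, every
point is moved by equally many of them, so double counting shows that exactly a fraction `ℓ/N`
of them moves `x`; hence `‖[I ⊗ W^{(ℓ)}, O^x]‖ ≤ 2ℓ/N`.
-/

open Equiv Finset Matrix
open scoped Kronecker Matrix.Norms.L2Operator

section PermMatrix

variable {ι κ R : Type*} [DecidableEq ι] [DecidableEq κ]

theorem permMatrix_kronecker_permMatrix [MulZeroOneClass R] (σ : Perm ι) (τ : Perm κ) :
    σ.permMatrix R ⊗ₖ τ.permMatrix R = Perm.permMatrix R (σ.prodCongr τ) := by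
  ext ⟨i, k⟩ ⟨j, l⟩
  simp [PEquiv.toMatrix_apply, ← ite_and, and_comm]

theorem commute_permMatrix [Fintype ι] [NonAssocSemiring R] {σ τ : Perm ι} (h : Commute σ τ) :
    Commute (σ.permMatrix R) (τ.permMatrix R) := by
  rw [Commute, SemiconjBy, ← permMatrix_mul, ← permMatrix_mul, h.eq]

end PermMatrix

theorem norm_lie_le {A : Type*} [NormedRing A] (a b : A) : ‖⁅a, b⁆‖ ≤ 2 * ‖a‖ * ‖b‖ := by
  rw [Ring.lie_def]
  calc ‖a * b - b * a‖ ≤ ‖a‖ * ‖b‖ + ‖b‖ * ‖a‖ :=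
        (norm_sub_le _ _).trans (add_le_add (norm_mul_le _ _) (norm_mul_le _ _))
    _ = 2 * ‖a‖ * ‖b‖ := by ring

section CycleCount

variable {α : Type*} [DecidableEq α] {S : Finset (Perm α)}

theorem card_filter_apply_ne_eq (hS : ∀ σ, ∀ γ ∈ S, σ * γ * σ⁻¹ ∈ S) (x y : α) :
    #{γ ∈ S | γ x ≠ x} = #{γ ∈ S | γ y ≠ y} := by
  set σ := swap x y
  have hσx : σ x = y := swap_apply_left x y
  have hσy : σ⁻¹ y = x := by rw [Perm.inv_eq_iff_eq, hσx]
  refine card_equiv (MulAut.conj σ).toEquiv fun γ => ?_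
  simp only [mem_filter, MulEquiv.toEquiv_eq_coe, MulEquiv.coe_toEquiv, MulAut.conj_apply,
    Perm.mul_apply, hσy]
  rw [← hσx, σ.injective.ne_iff]
  refine and_congr_left fun _ => ⟨hS σ γ, fun h => ?_⟩
  simpa [mul_assoc] using hS σ⁻¹ _ h

variable [Fintype α]

theorem card_filter_apply_ne_mul_card (hS : ∀ σ, ∀ γ ∈ S, σ * γ * σ⁻¹ ∈ S) (x : α) :
    #{γ ∈ S | γ x ≠ x} * Fintype.card α = ∑ γ ∈ S, #γ.support := by
  calc #{γ ∈ S | γ x ≠ x} * Fintype.card α = ∑ y : α, #{γ ∈ S | γ y ≠ y} := by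
        simp [card_filter_apply_ne_eq hS _ x, mul_comm]
    _ = ∑ γ ∈ S, #γ.support := by
        simp only [card_filter, Perm.support]
        exact sum_comm

variable (α) in
noncomputable def cyclesOfLength (l : ℕ) : Finset (Perm α) := {γ | γ.IsCycle ∧ #γ.support = l}

theorem conj_mem_cyclesOfLength {l : ℕ} (σ : Perm α) {γ : Perm α}
    (hγ : γ ∈ cyclesOfLength α l) : σ * γ * σ⁻¹ ∈ cyclesOfLength α l := by
  simp only [cyclesOfLength, mem_filter, mem_univ, true_and, Perm.card_support_conj] at hγ ⊢
  exact ⟨hγ.1.conj, hγ.2⟩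

theorem card_cyclesOfLength_filter_apply_ne_mul_card (l : ℕ) (x : α) :
    #{γ ∈ cyclesOfLength α l | γ x ≠ x} * Fintype.card α = #(cyclesOfLength α l) * l := by
  rw [card_filter_apply_ne_mul_card (fun σ _ => conj_mem_cyclesOfLength σ) x,
    sum_congr rfl fun γ hγ => (mem_filter.mp hγ).2.2, sum_const, smul_eq_mul]

end CycleCount

theorem xorFin_xorFin_self {n : ℕ} (a b : Fin (2 ^ n)) : xorFin (xorFin a b) b = a :=
  Fin.ext (xor_cancel_right a.val b.val)

def xorOracle {n : ℕ} (x : Fin (2 ^ n)) : Perm (Fin (2 ^ n) × Perm (Fin (2 ^ n))) where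
  toFun p := (xorFin p.1 (p.2 x), p.2)
  invFun p := (xorFin p.1 (p.2 x), p.2)
  left_inv p := by simp [xorFin_xorFin_self]
  right_inv p := by simp [xorFin_xorFin_self]

theorem OxM_eq_permMatrix {n : ℕ} (x : Fin (2 ^ n)) : OxM x = (xorOracle x).permMatrix ℂ := by
  ext ⟨y, π⟩ ⟨z, ρ⟩
  simp only [OxM, xorOracle, PEquiv.toMatrix_apply, toPEquiv_apply, Option.mem_def,
    Option.some.injEq, coe_fn_mk, Prod.mk.injEq]
  congr 1
  apply propext
  constructor
  · rintro ⟨rfl, rfl⟩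
    simp [xorFin_xorFin_self]
  · rintro ⟨rfl, rfl⟩
    simp [xorFin_xorFin_self]

theorem Rmat_eq_permMatrix {N : ℕ} (σ : Perm (Fin N)) :
    Rmat σ = (Equiv.mulRight σ).permMatrix ℂ := by
  ext ρ π
  simp [Rmat, eq_mul_inv_iff_mul_eq, eq_comm]

theorem norm_toCLM {ι : Type*} [Fintype ι] [DecidableEq ι] (M : Matrix ι ι ℂ) :
    ‖toCLM M‖ = ‖M‖ :=
  rfl

theorem Wmat_eq_smul_sum {N : ℕ} (l : ℕ) :
    Wmat (N := N) l = (#(cyclesOfLength (Fin N) l) : ℂ)⁻¹ •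
      ∑ γ ∈ cyclesOfLength (Fin N) l, Rmat γ :=
  rfl

theorem one_kronecker_Rmat {ι : Type*} [DecidableEq ι] {N : ℕ} (σ : Perm (Fin N)) :
    (1 : Matrix ι ι ℂ) ⊗ₖ Rmat σ =
      Perm.permMatrix ℂ ((1 : Perm ι).prodCongr (Equiv.mulRight σ)) := by
  rw [Rmat_eq_permMatrix, ← permMatrix_one, permMatrix_kronecker_permMatrix]

section Oracle

variable {n : ℕ}

theorem commute_one_kronecker_Rmat_OxM {x : Fin (2 ^ n)} {γ : Perm (Fin (2 ^ n))}
    (hγ : γ x = x) :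
    Commute ((1 : Matrix (Fin (2 ^ n)) (Fin (2 ^ n)) ℂ) ⊗ₖ Rmat γ) (OxM x) := by
  rw [one_kronecker_Rmat, OxM_eq_permMatrix]
  refine commute_permMatrix (Equiv.ext fun ⟨y, π⟩ => ?_)
  simp [xorOracle, hγ]

theorem norm_lie_one_kronecker_Rmat_OxM_le (x : Fin (2 ^ n)) (γ : Perm (Fin (2 ^ n))) :
    ‖⁅(1 : Matrix (Fin (2 ^ n)) (Fin (2 ^ n)) ℂ) ⊗ₖ Rmat γ, OxM x⁆‖ ≤ 2 := by
  rw [one_kronecker_Rmat, OxM_eq_permMatrix]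
  calc _ ≤ 2 * ‖Perm.permMatrix ℂ ((1 : Perm (Fin (2 ^ n))).prodCongr (Equiv.mulRight γ))‖ *
          ‖(xorOracle x).permMatrix ℂ‖ := norm_lie_le _ _
    _ ≤ 2 * 1 * 1 := by gcongr <;> exact permMatrix_l2_opNorm_le _
    _ = 2 := by norm_num

theorem lie_one_kronecker_Wmat_OxM (x : Fin (2 ^ n)) (l : ℕ) :
    ⁅(1 : Matrix (Fin (2 ^ n)) (Fin (2 ^ n)) ℂ) ⊗ₖ Wmat (N := 2 ^ n) l, OxM x⁆ =
      (#(cyclesOfLength (Fin (2 ^ n)) l) : ℂ)⁻¹ •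
        ∑ γ ∈ cyclesOfLength (Fin (2 ^ n)) l with γ x ≠ x,
          ⁅(1 : Matrix (Fin (2 ^ n)) (Fin (2 ^ n)) ℂ) ⊗ₖ Rmat γ, OxM x⁆ := by
  have hkron : (1 : Matrix (Fin (2 ^ n)) (Fin (2 ^ n)) ℂ) ⊗ₖ
      ∑ γ ∈ cyclesOfLength (Fin (2 ^ n)) l, Rmat γ =
        ∑ γ ∈ cyclesOfLength (Fin (2 ^ n)) l,
          (1 : Matrix (Fin (2 ^ n)) (Fin (2 ^ n)) ℂ) ⊗ₖ Rmat γ :=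
    map_sum (kroneckerBilinear (R := ℂ) 1) _ _
  have hfixed : ∀ γ ∈ cyclesOfLength (Fin (2 ^ n)) l,
      ⁅(1 : Matrix (Fin (2 ^ n)) (Fin (2 ^ n)) ℂ) ⊗ₖ Rmat γ, OxM x⁆ ≠ 0 → γ x ≠ x :=
    fun γ _ h hγ => h (by rw [Ring.lie_def, (commute_one_kronecker_Rmat_OxM hγ).eq, sub_self])
  rw [sum_filter_of_ne hfixed]
  simp only [Wmat_eq_smul_sum, kronecker_smul, hkron, Ring.lie_def, smul_mul_assoc,
    mul_smul_comm, ← smul_sub, sum_mul, mul_sum, ← sum_sub_distrib]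

theorem norm_lie_one_kronecker_Wmat_OxM_le (x : Fin (2 ^ n)) (l : ℕ) :
    ‖⁅(1 : Matrix (Fin (2 ^ n)) (Fin (2 ^ n)) ℂ) ⊗ₖ Wmat (N := 2 ^ n) l, OxM x⁆‖ ≤
      2 * l / 2 ^ n := by
  set C := cyclesOfLength (Fin (2 ^ n)) l
  have hcount : (#{γ ∈ C | γ x ≠ x} : ℝ) = #C * l / 2 ^ n := by
    rw [eq_div_iff (by positivity)]
    exact_mod_cast Fintype.card_fin (2 ^ n) ▸ card_cyclesOfLength_filter_apply_ne_mul_card l x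
  rw [lie_one_kronecker_Wmat_OxM, norm_smul, norm_inv, Complex.norm_natCast]
  calc (#C : ℝ)⁻¹ *
        ‖∑ γ ∈ C with γ x ≠ x, ⁅(1 : Matrix (Fin (2 ^ n)) (Fin (2 ^ n)) ℂ) ⊗ₖ Rmat γ, OxM x⁆‖
      ≤ (#C : ℝ)⁻¹ * (#{γ ∈ C | γ x ≠ x} * 2) := by
        gcongr
        refine (norm_sum_le_of_le _ fun γ _ => norm_lie_one_kronecker_Rmat_OxM_le x γ).trans_eq ?_
        rw [sum_const, nsmul_eq_mul]
    _ = 2 * l / 2 ^ n * ((#C : ℝ)⁻¹ * #C) := by rw [hcount]; ring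
    -- `#C = 0` is allowed: then `(#C)⁻¹ = 0` and `Wmat l = 0`.
    _ ≤ 2 * l / 2 ^ n :=
      mul_le_of_le_one_right (by positivity) (inv_mul_le_one_of_le₀ le_rfl (by positivity))

end Oracle

open scoped Kronecker in
theorem stmt16_general {n : ℕ} (x : Fin (2 ^ n)) :
    (∀ γ : Equiv.Perm (Fin (2 ^ n)), γ x = x →
        ((1 : Matrix (Fin (2 ^ n)) (Fin (2 ^ n)) ℂ) ⊗ₖ Rmat γ) * OxM x
          - OxM x * ((1 : Matrix (Fin (2 ^ n)) (Fin (2 ^ n)) ℂ) ⊗ₖ Rmat γ) = 0)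
    ∧ ‖toCLM (((1 : Matrix (Fin (2 ^ n)) (Fin (2 ^ n)) ℂ) ⊗ₖ Wmat (N := 2 ^ n) 2) * OxM x
        - OxM x * ((1 : Matrix (Fin (2 ^ n)) (Fin (2 ^ n)) ℂ) ⊗ₖ Wmat (N := 2 ^ n) 2))‖
        ≤ 4 / (2 : ℝ) ^ n
    ∧ ‖toCLM (((1 : Matrix (Fin (2 ^ n)) (Fin (2 ^ n)) ℂ) ⊗ₖ Wmat (N := 2 ^ n) 3) * OxM x
        - OxM x * ((1 : Matrix (Fin (2 ^ n)) (Fin (2 ^ n)) ℂ) ⊗ₖ Wmat (N := 2 ^ n) 3))‖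
        ≤ 6 / (2 : ℝ) ^ n := by
  refine ⟨fun γ hγ => sub_eq_zero.mpr (commute_one_kronecker_Rmat_OxM hγ).eq, ?_, ?_⟩ <;>
    rw [norm_toCLM, ← Ring.lie_def]
  · convert norm_lie_one_kronecker_Wmat_OxM_le x 2 using 2
    norm_num
  · convert norm_lie_one_kronecker_Wmat_OxM_le x 3 using 2
    norm_num

open scoped Kronecker in
/-- Fix `x ∈ [N]` (`N = 2^n`).  (a) If `γ(x) = x` then `I ⊗ R^γ`
commutes with `O^x`.  (b) `‖[I ⊗ W^{(2)}, O^x]‖ ≤ 4/N` and `‖[I ⊗ W^{(3)}, O^x]‖ ≤ 6/N`. -/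
theorem stmt16 {n : ℕ} (hn : 2 ≤ n) (x : Fin (2 ^ n)) :
    (∀ γ : Equiv.Perm (Fin (2 ^ n)), γ x = x →
        ((1 : Matrix (Fin (2 ^ n)) (Fin (2 ^ n)) ℂ) ⊗ₖ Rmat γ) * OxM x
          - OxM x * ((1 : Matrix (Fin (2 ^ n)) (Fin (2 ^ n)) ℂ) ⊗ₖ Rmat γ) = 0)
    ∧ ‖toCLM (((1 : Matrix (Fin (2 ^ n)) (Fin (2 ^ n)) ℂ) ⊗ₖ Wmat (N := 2 ^ n) 2) * OxM x
        - OxM x * ((1 : Matrix (Fin (2 ^ n)) (Fin (2 ^ n)) ℂ) ⊗ₖ Wmat (N := 2 ^ n) 2))‖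
        ≤ 4 / (2 : ℝ) ^ n
    ∧ ‖toCLM (((1 : Matrix (Fin (2 ^ n)) (Fin (2 ^ n)) ℂ) ⊗ₖ Wmat (N := 2 ^ n) 3) * OxM x
        - OxM x * ((1 : Matrix (Fin (2 ^ n)) (Fin (2 ^ n)) ℂ) ⊗ₖ Wmat (N := 2 ^ n) 3))‖
        ≤ 6 / (2 : ℝ) ^ n :=
  stmt16_general x
end

section
/- Let c ∈ {1,…,2n}. For every q ≥ 1 and every quantum query algorithm with access to a random permutation π of {0,1}^{2n} and its inverse, making fewer than q queries and outputting x ∈ {0,1}^{2n−c} (the first 2n−c bits of the measured X register), the average probability of double-sided zero search success satisfies (1/N!) ∑_{π ∈ S_N} ∑_{x ∈ {0,1}^{2n−c} : ∃ y ∈ {0,1}^{2n−c}, π(x‖0^c) = y‖0^c} Pr_π[x] ≤ 1828 · q³ · (n + 1) / 2^c, where N = 2^{2n}. In particular, for c = n this confirms Unruh's double-sided zero-search conjecture with bound 1828 · q³ · (n+1)/2^n. -/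
open scoped Classical Kronecker

/-- Bitwise XOR on bit strings `{0,1}^m`. -/
def bxor {m : ℕ} (a b : Fin m → Bool) : Fin m → Bool := fun i => xor (a i) (b i)

/-- The matrix of the oracle unitary `U^π` on `ℂ^N ⊗ ℂ^N` (with basis `{0,1}^m`),
determined by `U^π|x,y⟩ = |x, y ⊕ π(x)⟩`. -/
noncomputable def oracleM {m : ℕ} (π : Equiv.Perm (Fin m → Bool)) :
    Matrix ((Fin m → Bool) × (Fin m → Bool)) ((Fin m → Bool) × (Fin m → Bool)) ℂ :=
  fun p q => if p.1 = q.1 ∧ p.2 = bxor q.2 (π q.1) then 1 else 0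

/-- A quantum query algorithm making `q'` queries to a permutation of `{0,1}^m` and its
inverse: a finite workspace register `W` with a distinguished element `w0`, unitaries
`U⁽⁰⁾, …, U^{(q')}` on `ℂ^W ⊗ ℂ^N ⊗ ℂ^N`, and for each query a direction (forward or
inverse). -/
structure QueryAlg (m : ℕ) (q' : ℕ) where
  /-- the workspace index set -/
  W : Type
  [fW : Fintype W]
  [dW : DecidableEq W]
  /-- the distinguished initial workspace basis element -/
  w0 : W
  /-- the oracle-independent unitaries -/
  U : Fin (q' + 1) → Matrix (W × (Fin m → Bool) × (Fin m → Bool))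
      (W × (Fin m → Bool) × (Fin m → Bool)) ℂ
  unitary : ∀ j, U j ∈ Matrix.unitaryGroup (W × (Fin m → Bool) × (Fin m → Bool)) ℂ
  /-- direction of each query: `true` = forward, `false` = inverse -/
  fwd : Fin q' → Bool

attribute [instance] QueryAlg.fW QueryAlg.dW

/-- The final state `|ψ_π⟩ = U^{(q')} (I_W ⊗ O_{q'}) ⋯ (I_W ⊗ O_1) U⁽⁰⁾ |w0, 0, 0⟩`,
where `O_j = U^π` for a forward query and `O_j = U^{π⁻¹}` for an inverse query. -/
noncomputable def finalState {m q' : ℕ} (A : QueryAlg m q') (π : Equiv.Perm (Fin m → Bool)) :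
    A.W × (Fin m → Bool) × (Fin m → Bool) → ℂ :=
  (((List.ofFn fun j : Fin q' =>
        A.U j.succ *
          ((1 : Matrix A.W A.W ℂ) ⊗ₖ oracleM (if A.fwd j then π else π⁻¹))).reverse.prod
      * A.U 0).mulVec
    fun p => if p = (A.w0, fun _ => false, fun _ => false) then 1 else 0)

/-- `x ‖ z`: concatenation of `x ∈ {0,1}^{m−c}` with `z ∈ {0,1}^c`, viewed as an element of
`{0,1}^m` (the first `m−c` bits are `x`). -/
def padZ {m c : ℕ} (h : c ≤ m) (x : Fin (m - c) → Bool) (z : Fin c → Bool) : Fin m → Bool :=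
  fun i => Fin.append x z (Fin.cast (Nat.sub_add_cancel h).symm i)

/-- `Pr_π[x]`: the probability that the algorithm outputs the bit string
`x ∈ {0,1}^{m−c}` (the first `m−c` bits of the measured `X` register):
`∑_{w} ∑_{x″ ∈ {0,1}^c} ∑_{y′} |⟨w, x‖x″, y′|ψ_π⟩|²`. -/
noncomputable def outProbPrefix {m c q' : ℕ} (h : c ≤ m) (A : QueryAlg m q')
    (π : Equiv.Perm (Fin m → Bool)) (x : Fin (m - c) → Bool) : ℝ :=
  ∑ w : A.W, ∑ z : Fin c → Bool, ∑ y : Fin m → Bool,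
    ‖finalState A π (w, padZ h x z, y)‖ ^ 2

/-!
Averaging over transpositions. Write `ι x = x‖0ᶜ` and `Z` for the strings with zero suffix.
For every `x` and every `t ∈ {0,1}^{2n}` the substitution `π ↦ π ∘ (ι x t)` by a transposition
turns the success event `π (ι x) ∈ Z` into `π t ∈ Z`, while changing the oracle only on the
two points `ι x, t`. By the hybrid argument the final state moves by at most
`4 q' ∑ⱼ (query weight of step j on ι x and t)` in squared norm, hence
`Pr_{π ∘ (ι x t)}[x] ≤ 2 Pr_π[x] + 8 q' ∑ⱼ (…)`. Averaging over all `2^{2n}` choices of `t`,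
only the `2^{2n-c}` strings with `π t ∈ Z` contribute; since the output probabilities and the
query weights of each step sum to at most one, the average success probability is at most
`(2 + 16 q'²) / 2^c`.
-/

open Finset Matrix WithLp

namespace DoubleSidedZeroSearch

section Hybrid

def trajectory {α : Type*} (f : ℕ → α → α) (x : α) : ℕ → α
  | 0 => x
  | k + 1 => f k (trajectory f x k)

theorem dist_trajectory_le {α : Type*} [PseudoMetricSpace α] {f g : ℕ → α → α}
    (hf : ∀ j, LipschitzWith 1 (f j)) (x : α) (k : ℕ) :
    dist (trajectory f x k) (trajectory g x k) ≤
      ∑ j ∈ range k, dist (f j (trajectory g x j)) (g j (trajectory g x j)) := by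
  induction k with
  | zero => simp [trajectory]
  | succ k ih =>
    rw [sum_range_succ]
    calc dist (f k (trajectory f x k)) (g k (trajectory g x k))
        ≤ dist (f k (trajectory f x k)) (f k (trajectory g x k))
          + dist (f k (trajectory g x k)) (g k (trajectory g x k)) := dist_triangle _ _ _
      _ ≤ dist (trajectory f x k) (trajectory g x k)
          + dist (f k (trajectory g x k)) (g k (trajectory g x k)) := by
        gcongr
        simpa using (hf k).dist_le_mul (trajectory f x k) (trajectory g x k)
      _ ≤ _ := by gcongr

theorem dist_trajectory_sq_le {α : Type*} [PseudoMetricSpace α] {f g : ℕ → α → α}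
    (hf : ∀ j, LipschitzWith 1 (f j)) (x : α) (k : ℕ) :
    dist (trajectory f x k) (trajectory g x k) ^ 2 ≤
      k * ∑ j ∈ range k, dist (f j (trajectory g x j)) (g j (trajectory g x j)) ^ 2 := by
  calc _ ≤ (∑ j ∈ range k, dist (f j (trajectory g x j)) (g j (trajectory g x j))) ^ 2 := by
        gcongr
        exact dist_trajectory_le hf x k
    _ ≤ _ := by simpa using sq_sum_le_card_mul_sum_sq (s := range k)

end Hybrid

section Euclidean

variable {𝕜 ι : Type*} [RCLike 𝕜] [Fintype ι] [DecidableEq ι]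

theorem norm_toEuclideanCLM_of_mem_unitaryGroup {U : Matrix ι ι 𝕜}
    (hU : U ∈ Matrix.unitaryGroup ι 𝕜) (v : EuclideanSpace 𝕜 ι) :
    ‖toEuclideanCLM (𝕜 := 𝕜) U v‖ = ‖v‖ :=
  ContinuousLinearMap.norm_map_of_mem_unitary (Unitary.map_mem _ hU) v

theorem toLp_prod_ofFn_mulVec (M : ℕ → Matrix ι ι 𝕜) (v : ι → 𝕜) (k : ℕ) :
    toLp 2 ((List.ofFn fun j : Fin k => M j).reverse.prod *ᵥ v) =
      trajectory (fun j => toEuclideanCLM (𝕜 := 𝕜) (M j)) (toLp 2 v) k := by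
  induction k with
  | zero => simp [trajectory]
  | succ k ih =>
    rw [List.ofFn_succ', List.concat_eq_append, List.reverse_append, List.reverse_singleton,
      List.singleton_append, List.prod_cons, ← mulVec_mulVec]
    simp only [Fin.val_castSucc, Fin.val_last, trajectory, ← ih]
    rfl

end Euclidean

theorem sum_pair_le {ι M : Type*} [DecidableEq ι] [AddCommMonoid M] [PartialOrder M]
    [IsOrderedAddMonoid M] {f : ι → M} (hf : ∀ i, 0 ≤ f i) (a b : ι) :
    ∑ i ∈ {a, b}, f i ≤ f a + f b := by
  by_cases hab : a = b
  · simpa [hab] using le_add_of_nonneg_left (hf b)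
  · rw [sum_pair hab]

section QueryMass

variable {𝕜 W X Y : Type*} [RCLike 𝕜] [Fintype W] [Fintype Y]

noncomputable def queryMass (ψ : EuclideanSpace 𝕜 (W × X × Y)) (u : X) : ℝ :=
  ∑ w, ∑ y, ‖ψ (w, u, y)‖ ^ 2

theorem queryMass_nonneg (ψ : EuclideanSpace 𝕜 (W × X × Y)) (u : X) : 0 ≤ queryMass ψ u := by
  unfold queryMass
  positivity

theorem sum_queryMass [Fintype X] (ψ : EuclideanSpace 𝕜 (W × X × Y)) :
    ∑ u, queryMass ψ u = ‖ψ‖ ^ 2 := by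
  simp only [EuclideanSpace.norm_sq_eq, Fintype.sum_prod_type, queryMass]
  exact sum_comm

theorem sum_queryMass_le_of_injOn [Fintype X] {ι : Type*} (ψ : EuclideanSpace 𝕜 (W × X × Y))
    {s : Finset ι} {f : ι → X} (hf : Set.InjOn f s) :
    ∑ i ∈ s, queryMass ψ (f i) ≤ ‖ψ‖ ^ 2 := by
  rw [← sum_image hf, ← sum_queryMass]
  exact sum_le_sum_of_subset_of_nonneg (subset_univ _) fun u _ _ => queryMass_nonneg ψ u

theorem queryMass_neg (ψ : EuclideanSpace 𝕜 (W × X × Y)) (u : X) :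
    queryMass (-ψ) u = queryMass ψ u := by
  simp only [queryMass, PiLp.neg_apply, norm_neg]

theorem queryMass_add_le (ψ φ : EuclideanSpace 𝕜 (W × X × Y)) (u : X) :
    queryMass (ψ + φ) u ≤ 2 * (queryMass ψ u + queryMass φ u) := by
  simp only [queryMass, ← sum_add_distrib, mul_sum]
  gcongr with w _ y _
  calc ‖(ψ + φ) (w, u, y)‖ ^ 2 ≤ (‖ψ (w, u, y)‖ + ‖φ (w, u, y)‖) ^ 2 := by
        gcongr
        exact norm_add_le _ _
    _ ≤ _ := add_sq_le

end QueryMass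

section Oracle

variable {W : Type*} [Fintype W] [DecidableEq W] {m : ℕ}

local notation "𝔼" => EuclideanSpace ℂ (W × (Fin m → Bool) × (Fin m → Bool))

theorem bxor_bxor_cancel_right (a b : Fin m → Bool) : bxor (bxor a b) b = a := by
  funext i
  simp [bxor]

noncomputable def oracle (π : Equiv.Perm (Fin m → Bool)) : 𝔼 →L[ℂ] 𝔼 :=
  toEuclideanCLM (𝕜 := ℂ) ((1 : Matrix W W ℂ) ⊗ₖ oracleM π)

theorem oracle_apply (π : Equiv.Perm (Fin m → Bool)) (ψ : 𝔼) (w : W) (u y : Fin m → Bool) :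
    oracle π ψ (w, u, y) = ψ (w, u, bxor y (π u)) := by
  rw [oracle, ofLp_toEuclideanCLM, mulVec, dotProduct,
    Fintype.sum_eq_single (w, u, bxor y (π u))]
  · simp [oracleM, bxor_bxor_cancel_right]
  · rintro ⟨w', u', y'⟩ hne
    have : ¬ (w = w' ∧ u = u' ∧ y = bxor y' (π u')) := by
      rintro ⟨rfl, rfl, rfl⟩
      exact hne (by simp [bxor_bxor_cancel_right])
    simp only [kroneckerMap_apply, oracleM, one_apply]
    split_ifs <;> simp_all

theorem queryMass_oracle (π : Equiv.Perm (Fin m → Bool)) (ψ : 𝔼) (u : Fin m → Bool) :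
    queryMass (oracle π ψ) u = queryMass ψ u := by
  simp only [queryMass, oracle_apply]
  exact sum_congr rfl fun w _ =>
    Equiv.sum_comp (Function.Involutive.toPerm _ fun y => bxor_bxor_cancel_right y (π u))
      fun y => ‖ψ (w, u, y)‖ ^ 2

theorem norm_oracle (π : Equiv.Perm (Fin m → Bool)) (ψ : 𝔼) : ‖oracle π ψ‖ = ‖ψ‖ := by
  rw [← sq_eq_sq₀ (norm_nonneg _) (norm_nonneg _), ← sum_queryMass, ← sum_queryMass]
  simp only [queryMass_oracle]

theorem norm_oracle_sub_oracle_sq_le {σ σ' : Equiv.Perm (Fin m → Bool)} {a b : Fin m → Bool}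
    (hσ : ∀ u, σ u ≠ σ' u → u = a ∨ u = b) (ψ : 𝔼) :
    ‖oracle σ ψ - oracle σ' ψ‖ ^ 2 ≤ 4 * (queryMass ψ a + queryMass ψ b) := by
  have hzero : ∀ u ∉ ({a, b} : Finset _), queryMass (oracle σ ψ - oracle σ' ψ) u = 0 := by
    intro u hu
    have hσu : σ u = σ' u := by
      by_contra hne
      simp only [mem_insert, mem_singleton] at hu
      exact hu (hσ u hne)
    simp [queryMass, oracle_apply, hσu]
  have hle (u) : queryMass (oracle σ ψ - oracle σ' ψ) u ≤ 4 * queryMass ψ u :=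
    calc _ ≤ 2 * (queryMass (oracle σ ψ) u + queryMass (-oracle σ' ψ) u) :=
          sub_eq_add_neg (oracle σ ψ) _ ▸ queryMass_add_le _ _ u
      _ = 4 * queryMass ψ u := by
          rw [queryMass_neg, queryMass_oracle, queryMass_oracle]
          ring
  calc ‖oracle σ ψ - oracle σ' ψ‖ ^ 2
      = ∑ u ∈ {a, b}, queryMass (oracle σ ψ - oracle σ' ψ) u := by
        rw [← sum_queryMass, sum_subset (subset_univ _) fun u _ hu => hzero u hu]
    _ ≤ ∑ u ∈ {a, b}, 4 * queryMass ψ u := sum_le_sum fun u _ => hle u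
    _ ≤ 4 * (queryMass ψ a + queryMass ψ b) := by
        rw [← mul_sum]
        gcongr
        exact sum_pair_le (queryMass_nonneg ψ) a b

end Oracle

section Algorithm

variable {m q' : ℕ}

abbrev StateSpace (A : QueryAlg m q') :=
  EuclideanSpace ℂ (A.W × (Fin m → Bool) × (Fin m → Bool))

def queriedPerm (A : QueryAlg m q') (π : Equiv.Perm (Fin m → Bool)) (j : Fin q') :
    Equiv.Perm (Fin m → Bool) :=
  if A.fwd j then π else π⁻¹

-- Steps past the last query are the identity, so that the run is a trajectory indexed by `ℕ`.
noncomputable def stepMatrix (A : QueryAlg m q') (π : Equiv.Perm (Fin m → Bool)) (j : ℕ) :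
    Matrix (A.W × (Fin m → Bool) × (Fin m → Bool)) (A.W × (Fin m → Bool) × (Fin m → Bool)) ℂ :=
  if h : j < q' then
    A.U (Fin.succ ⟨j, h⟩) * ((1 : Matrix A.W A.W ℂ) ⊗ₖ oracleM (queriedPerm A π ⟨j, h⟩))
  else 1

noncomputable def step (A : QueryAlg m q') (π : Equiv.Perm (Fin m → Bool)) (j : ℕ) :
    StateSpace A → StateSpace A :=
  toEuclideanCLM (𝕜 := ℂ) (stepMatrix A π j)

noncomputable def state (A : QueryAlg m q') (π : Equiv.Perm (Fin m → Bool)) : ℕ → StateSpace A :=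
  trajectory (step A π) <|
    toEuclideanCLM (𝕜 := ℂ) (A.U 0) (EuclideanSpace.single (A.w0, fun _ => false, fun _ => false) 1)

theorem finalState_eq_ofLp_state (A : QueryAlg m q') (π : Equiv.Perm (Fin m → Bool)) :
    finalState A π = ofLp (state A π q') := by
  have hsteps : (List.ofFn fun j : Fin q' =>
      A.U j.succ * ((1 : Matrix A.W A.W ℂ) ⊗ₖ oracleM (if A.fwd j then π else π⁻¹))) =
      List.ofFn fun j : Fin q' => stepMatrix A π j := by
    simp [stepMatrix, queriedPerm]
  have hinit : (fun p : A.W × (Fin m → Bool) × (Fin m → Bool) =>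
      if p = (A.w0, fun _ => false, fun _ => false) then 1 else 0) =
      ofLp (EuclideanSpace.single (𝕜 := ℂ) (A.w0, fun _ => false, fun _ => false) 1) := by
    funext p
    simp
  rw [finalState, hsteps, hinit, ← mulVec_mulVec, ← ofLp_toLp 2 (_ *ᵥ _), toLp_prod_ofFn_mulVec]
  rfl

theorem norm_step_apply (A : QueryAlg m q') (π : Equiv.Perm (Fin m → Bool)) (j : ℕ)
    (ψ : StateSpace A) : ‖step A π j ψ‖ = ‖ψ‖ := by
  unfold step stepMatrix
  split_ifs
  · rw [map_mul, mul_apply_eq_comp, norm_toEuclideanCLM_of_mem_unitaryGroup (A.unitary _)]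
    exact norm_oracle _ ψ
  · simp

theorem norm_state (A : QueryAlg m q') (π : Equiv.Perm (Fin m → Bool)) (k : ℕ) :
    ‖state A π k‖ = 1 := by
  induction k with
  | zero => simp [state, trajectory, norm_toEuclideanCLM_of_mem_unitaryGroup (A.unitary 0)]
  | succ k ih =>
    simp only [state, trajectory] at ih ⊢
    rw [norm_step_apply, ih]

-- The value of the input register with which query `j` reads `π` at the point `a`.
def queryInput (A : QueryAlg m q') (π : Equiv.Perm (Fin m → Bool)) (j : Fin q')
    (a : Fin m → Bool) : Fin m → Bool :=
  if A.fwd j then a else π a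

noncomputable def queryWeight (A : QueryAlg m q') (π : Equiv.Perm (Fin m → Bool)) (j : Fin q')
    (a : Fin m → Bool) : ℝ :=
  queryMass (state A π j) (queryInput A π j a)

theorem queryWeight_nonneg (A : QueryAlg m q') (π : Equiv.Perm (Fin m → Bool)) (j : Fin q')
    (a : Fin m → Bool) : 0 ≤ queryWeight A π j a :=
  queryMass_nonneg _ _

theorem sum_queryWeight (A : QueryAlg m q') (π : Equiv.Perm (Fin m → Bool)) (j : Fin q') :
    ∑ a, queryWeight A π j a = 1 := by
  have hreindex : ∑ a, queryWeight A π j a = ∑ u, queryMass (state A π j) u := by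
    unfold queryWeight queryInput
    split_ifs
    · rfl
    · exact Equiv.sum_comp π _
  rw [hreindex, sum_queryMass, norm_state, one_pow]

theorem queriedPerm_mul_swap_ne (A : QueryAlg m q') (π : Equiv.Perm (Fin m → Bool)) (j : Fin q')
    {a b u : Fin m → Bool} (h : queriedPerm A (π * Equiv.swap a b) j u ≠ queriedPerm A π j u) :
    u = queryInput A π j a ∨ u = queryInput A π j b := by
  unfold queriedPerm queryInput at *
  by_contra! hu
  split_ifs at h hu
  · exact h (by rw [Equiv.Perm.mul_apply, Equiv.swap_apply_of_ne_of_ne hu.1 hu.2])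
  · have ha : π⁻¹ u ≠ a := fun e => hu.1 (by simp [← e])
    have hb : π⁻¹ u ≠ b := fun e => hu.2 (by simp [← e])
    exact h (by rw [_root_.mul_inv_rev, Equiv.swap_inv, Equiv.Perm.mul_apply,
      Equiv.swap_apply_of_ne_of_ne ha hb])

theorem norm_step_sub_step_sq_le (A : QueryAlg m q') {π π' : Equiv.Perm (Fin m → Bool)}
    (j : Fin q') {a b : Fin m → Bool}
    (h : ∀ u, queriedPerm A π' j u ≠ queriedPerm A π j u → u = a ∨ u = b) (ψ : StateSpace A) :
    ‖step A π' j ψ - step A π j ψ‖ ^ 2 ≤ 4 * (queryMass ψ a + queryMass ψ b) := by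
  simp only [step, stepMatrix, dif_pos j.isLt, Fin.eta, map_mul, mul_apply_eq_comp, ← map_sub,
    norm_toEuclideanCLM_of_mem_unitaryGroup (A.unitary _)]
  exact norm_oracle_sub_oracle_sq_le h ψ

theorem norm_state_mul_swap_sub_sq_le (A : QueryAlg m q') (π : Equiv.Perm (Fin m → Bool))
    (a b : Fin m → Bool) :
    ‖state A (π * Equiv.swap a b) q' - state A π q'‖ ^ 2
      ≤ 4 * q' * ∑ j : Fin q', (queryWeight A π j a + queryWeight A π j b) := by
  have hlip (j) : LipschitzWith 1 (step A (π * Equiv.swap a b) j) :=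
    (AddMonoidHomClass.isometry_of_norm (toEuclideanCLM (𝕜 := ℂ) (stepMatrix A _ j))
      (norm_step_apply A _ j)).lipschitz
  calc ‖state A (π * Equiv.swap a b) q' - state A π q'‖ ^ 2
      = dist (state A (π * Equiv.swap a b) q') (state A π q') ^ 2 := by rw [dist_eq_norm]
    _ ≤ q' * ∑ j ∈ range q',
          dist (step A (π * Equiv.swap a b) j (state A π j)) (step A π j (state A π j)) ^ 2 :=
        dist_trajectory_sq_le hlip _ q'
    _ = q' * ∑ j : Fin q',
          ‖step A (π * Equiv.swap a b) j (state A π j) - step A π j (state A π j)‖ ^ 2 := by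
        simp only [← Fin.sum_univ_eq_sum_range, dist_eq_norm]
    _ ≤ q' * ∑ j : Fin q', 4 * (queryWeight A π j a + queryWeight A π j b) := by
        gcongr with j
        exact norm_step_sub_step_sq_le A j (fun u => queriedPerm_mul_swap_ne A π j) _
    _ = 4 * q' * ∑ j : Fin q', (queryWeight A π j a + queryWeight A π j b) := by
        rw [← mul_sum]
        ring

end Algorithm

section Output

variable {m c q' : ℕ}

theorem padZ_injective (h : c ≤ m) :
    Function.Injective fun p : (Fin (m - c) → Bool) × (Fin c → Bool) => padZ h p.1 p.2 := by
  intro p p' hp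
  apply (Fin.appendEquiv (m - c) c).injective
  funext i
  simpa [padZ] using congrFun hp (Fin.cast (Nat.sub_add_cancel h) i)

theorem padZ_left_injective (h : c ≤ m) (z : Fin c → Bool) :
    Function.Injective fun x => padZ h x z :=
  (padZ_injective h).comp (Prod.mk_left_injective z)

theorem padZ_right_injective (h : c ≤ m) (x : Fin (m - c) → Bool) :
    Function.Injective (padZ h x) :=
  (padZ_injective h).comp (Prod.mk_right_injective x)

theorem outProbPrefix_eq (h : c ≤ m) (A : QueryAlg m q') (π : Equiv.Perm (Fin m → Bool))
    (x : Fin (m - c) → Bool) :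
    outProbPrefix h A π x = ∑ z, queryMass (state A π q') (padZ h x z) := by
  rw [outProbPrefix, finalState_eq_ofLp_state, sum_comm]
  rfl

theorem sum_outProbPrefix_le_one (h : c ≤ m) (A : QueryAlg m q')
    (π : Equiv.Perm (Fin m → Bool)) : ∑ x, outProbPrefix h A π x ≤ 1 := by
  simp only [outProbPrefix_eq]
  rw [← Fintype.sum_prod_type', ← one_pow 2, ← norm_state A π q']
  exact sum_queryMass_le_of_injOn _ (padZ_injective h).injOn

theorem outProbPrefix_le (h : c ≤ m) (A : QueryAlg m q') (π π' : Equiv.Perm (Fin m → Bool))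
    (x : Fin (m - c) → Bool) :
    outProbPrefix h A π' x ≤ 2 * (outProbPrefix h A π x + ‖state A π' q' - state A π q'‖ ^ 2) := by
  set ψ := state A π q'
  set ψ' := state A π' q'
  simp only [outProbPrefix_eq]
  calc ∑ z, queryMass ψ' (padZ h x z) = ∑ z, queryMass (ψ + (ψ' - ψ)) (padZ h x z) := by
        rw [add_sub_cancel]
    _ ≤ ∑ z, 2 * (queryMass ψ (padZ h x z) + queryMass (ψ' - ψ) (padZ h x z)) :=
        sum_le_sum fun z _ => queryMass_add_le _ _ _
    _ = 2 * (∑ z, queryMass ψ (padZ h x z) + ∑ z, queryMass (ψ' - ψ) (padZ h x z)) := by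
        rw [← mul_sum, sum_add_distrib]
    _ ≤ _ := by
        gcongr
        exact sum_queryMass_le_of_injOn _ (padZ_right_injective h x).injOn

end Output

section Counting

variable {m c : ℕ}

def zeroSuffixed (h : c ≤ m) : Finset (Fin m → Bool) :=
  univ.image fun y => padZ h y fun _ => false

theorem mem_zeroSuffixed (h : c ≤ m) {a : Fin m → Bool} :
    a ∈ zeroSuffixed h ↔ ∃ y, a = padZ h y fun _ => false := by
  simp [zeroSuffixed, eq_comm]

theorem card_zeroSuffixed (h : c ≤ m) : #(zeroSuffixed h) = 2 ^ (m - c) := by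
  rw [zeroSuffixed, card_image_of_injective _ (padZ_left_injective h _),
    card_univ, Fintype.card_fun, Fintype.card_bool, Fintype.card_fin]

theorem card_filter_perm_mem_zeroSuffixed (h : c ≤ m) (π : Equiv.Perm (Fin m → Bool)) :
    #{t | π t ∈ zeroSuffixed h} = 2 ^ (m - c) := by
  rw [← card_zeroSuffixed h]
  exact card_equiv π fun t => by simp

theorem sum_perm_ite_eq_sum_mul_swap {α M : Type*} [Fintype α] [DecidableEq α] [AddCommMonoid M]
    (S : Finset α) (F : Equiv.Perm α → M) (a t : α) :
    ∑ π : Equiv.Perm α, (if π a ∈ S then F π else 0) =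
      ∑ π : Equiv.Perm α, if π t ∈ S then F (π * Equiv.swap a t) else 0 := by
  rw [← Equiv.sum_comp (Equiv.mulRight (Equiv.swap a t))]
  simp [Equiv.swap_apply_left]

theorem sum_sum_add_le_card_add_card {α β : Type*} [Fintype α] {w : α → ℝ} (hw : ∀ a, 0 ≤ w a)
    (hw1 : ∑ a, w a ≤ 1) {X : Finset β} {T : Finset α} {f : β → α} (hf : Set.InjOn f X) :
    ∑ x ∈ X, ∑ t ∈ T, (w (f x) + w t) ≤ #T + #X := by
  have hsub (s : Finset α) : ∑ a ∈ s, w a ≤ 1 :=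
    (sum_le_sum_of_subset_of_nonneg (subset_univ s) fun a _ _ => hw a).trans hw1
  calc ∑ x ∈ X, ∑ t ∈ T, (w (f x) + w t) = #T * ∑ x ∈ X, w (f x) + #X * ∑ t ∈ T, w t := by
        simp only [sum_add_distrib, sum_const, nsmul_eq_mul, mul_sum]
    _ ≤ #T * 1 + #X * 1 := by
        gcongr
        · rw [← sum_image hf]
          exact hsub _
        · exact hsub T
    _ = #T + #X := by ring

end Counting

section Main

variable {m c q' : ℕ}

noncomputable def swapBound (h : c ≤ m) (A : QueryAlg m q') (π : Equiv.Perm (Fin m → Bool))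
    (x : Fin (m - c) → Bool) (t : Fin m → Bool) : ℝ :=
  2 * outProbPrefix h A π x +
    8 * q' * ∑ j, (queryWeight A π j (padZ h x fun _ => false) + queryWeight A π j t)

theorem outProbPrefix_mul_swap_le (h : c ≤ m) (A : QueryAlg m q') (π : Equiv.Perm (Fin m → Bool))
    (x : Fin (m - c) → Bool) (t : Fin m → Bool) :
    outProbPrefix h A (π * Equiv.swap (padZ h x fun _ => false) t) x ≤ swapBound h A π x t := by
  have := outProbPrefix_le h A π (π * Equiv.swap (padZ h x fun _ => false) t) x
  have := norm_state_mul_swap_sub_sq_le A π (padZ h x fun _ => false) t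
  rw [swapBound]
  linarith

theorem sum_sum_swapBound_le (h : c ≤ m) (A : QueryAlg m q') (π : Equiv.Perm (Fin m → Bool)) :
    ∑ x, ∑ t with π t ∈ zeroSuffixed h, swapBound h A π x t ≤ (2 + 16 * q' ^ 2) * 2 ^ (m - c) := by
  set T : Finset (Fin m → Bool) := {t | π t ∈ zeroSuffixed h}
  have hT : (#T : ℝ) = 2 ^ (m - c) := by exact_mod_cast card_filter_perm_mem_zeroSuffixed h π
  have hquery (j : Fin q') : ∑ x, ∑ t ∈ T,
      (queryWeight A π j (padZ h x fun _ => false) + queryWeight A π j t) ≤ 2 * 2 ^ (m - c) := by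
    have := sum_sum_add_le_card_add_card (queryWeight_nonneg A π j) (sum_queryWeight A π j).le
      (X := univ) (T := T) (padZ_left_injective h fun _ => false).injOn
    rw [hT, card_univ, Fintype.card_fun, Fintype.card_bool, Fintype.card_fin] at this
    push_cast at this
    linarith
  calc ∑ x, ∑ t ∈ T, swapBound h A π x t
      = ∑ x, ∑ _t ∈ T, 2 * outProbPrefix h A π x + 8 * q' * ∑ x, ∑ t ∈ T, ∑ j,
          (queryWeight A π j (padZ h x fun _ => false) + queryWeight A π j t) := by
        rw [mul_sum, ← sum_add_distrib]
        exact sum_congr rfl fun x _ => by rw [mul_sum, ← sum_add_distrib]; rfl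
    _ = 2 * #T * ∑ x, outProbPrefix h A π x + 8 * q' * ∑ j, ∑ x, ∑ t ∈ T,
          (queryWeight A π j (padZ h x fun _ => false) + queryWeight A π j t) := by
        rw [(sum_congr rfl fun _ _ => sum_comm).trans sum_comm, mul_sum (a := 2 * (#T : ℝ))]
        simp only [sum_const, nsmul_eq_mul]
        ring_nf
    _ ≤ 2 * 2 ^ (m - c) * 1 + 8 * q' * ∑ _j : Fin q', 2 * 2 ^ (m - c) := by
        rw [hT]
        gcongr
        · exact sum_outProbPrefix_le_one h A π
        · exact hquery _
    _ = (2 + 16 * q' ^ 2) * 2 ^ (m - c) := by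
        simp only [sum_const, card_univ, Fintype.card_fin, nsmul_eq_mul]
        ring

theorem two_pow_mul_sum_success_le (h : c ≤ m) (A : QueryAlg m q') :
    (2 : ℝ) ^ m * ∑ π : Equiv.Perm (Fin m → Bool),
        ∑ x with π (padZ h x fun _ => false) ∈ zeroSuffixed h, outProbPrefix h A π x
      ≤ (2 + 16 * (q' : ℝ) ^ 2) * 2 ^ (m - c) * (2 ^ m).factorial :=
  calc (2 : ℝ) ^ m * ∑ π : Equiv.Perm (Fin m → Bool),
        ∑ x with π (padZ h x fun _ => false) ∈ zeroSuffixed h, outProbPrefix h A π x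
      = ∑ x, ∑ _t : Fin m → Bool, ∑ π : Equiv.Perm (Fin m → Bool),
          if π (padZ h x fun _ => false) ∈ zeroSuffixed h then outProbPrefix h A π x else 0 := by
        simp only [sum_filter, sum_const, card_univ, Fintype.card_fun, Fintype.card_bool,
          Fintype.card_fin, nsmul_eq_mul, mul_sum]
        push_cast
        exact sum_comm
    _ = ∑ x, ∑ t : Fin m → Bool, ∑ π : Equiv.Perm (Fin m → Bool),
          if π t ∈ zeroSuffixed h then
            outProbPrefix h A (π * Equiv.swap (padZ h x fun _ => false) t) x
          else 0 :=
        sum_congr rfl fun x _ => sum_congr rfl fun t _ =>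
          sum_perm_ite_eq_sum_mul_swap (zeroSuffixed h) (outProbPrefix h A · x) _ t
    _ ≤ ∑ x, ∑ t : Fin m → Bool, ∑ π : Equiv.Perm (Fin m → Bool),
          if π t ∈ zeroSuffixed h then swapBound h A π x t else 0 := by
        gcongr with x _ t _ π _
        split_ifs
        · exact outProbPrefix_mul_swap_le h A π x t
        · rfl
    _ = ∑ π : Equiv.Perm (Fin m → Bool), ∑ x, ∑ t with π t ∈ zeroSuffixed h,
          swapBound h A π x t := by
        simp only [sum_filter]
        exact (sum_congr rfl fun _ _ => sum_comm).trans sum_comm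
    _ ≤ ∑ _π : Equiv.Perm (Fin m → Bool), (2 + 16 * (q' : ℝ) ^ 2) * 2 ^ (m - c) :=
        sum_le_sum fun π _ => sum_sum_swapBound_le h A π
    _ = (2 + 16 * (q' : ℝ) ^ 2) * 2 ^ (m - c) * (2 ^ m).factorial := by
        rw [sum_const, card_univ, Fintype.card_perm, Fintype.card_fun, Fintype.card_bool,
          Fintype.card_fin, nsmul_eq_mul, mul_comm]

theorem average_success_le (h : c ≤ m) (A : QueryAlg m q') :
    (∑ π : Equiv.Perm (Fin m → Bool),
        ∑ x ∈ univ.filter (fun x : Fin (m - c) → Bool =>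
          ∃ y : Fin (m - c) → Bool, π (padZ h x fun _ => false) = padZ h y fun _ => false),
          outProbPrefix h A π x) / ((2 ^ m : ℕ).factorial : ℝ)
      ≤ (2 + 16 * (q' : ℝ) ^ 2) / 2 ^ c := by
  have hbound := two_pow_mul_sum_success_le h A
  simp only [mem_zeroSuffixed] at hbound
  rw [show (2 : ℝ) ^ m = 2 ^ (m - c) * 2 ^ c by rw [← pow_add, Nat.sub_add_cancel h]] at hbound
  rw [div_le_div_iff₀ (by positivity) (by positivity)]
  nlinarith [show (0 : ℝ) < 2 ^ (m - c) by positivity]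

end Main

end DoubleSidedZeroSearch

theorem stmt19_general {n c : ℕ} (hc2 : c ≤ 2 * n)
    (q q' : ℕ) (hq' : q' < q) (A : QueryAlg (2 * n) q') :
    (∑ π : Equiv.Perm (Fin (2 * n) → Bool),
        ∑ x ∈ Finset.univ.filter
            (fun x : Fin (2 * n - c) → Bool =>
              ∃ y : Fin (2 * n - c) → Bool,
                π (padZ hc2 x fun _ => false) = padZ hc2 y fun _ => false),
          outProbPrefix hc2 A π x) / (((2 ^ (2 * n) : ℕ).factorial : ℝ))
      ≤ 1828 * (q : ℝ) ^ 3 * ((n : ℝ) + 1) / (2 : ℝ) ^ c := by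
  refine (DoubleSidedZeroSearch.average_success_le hc2 A).trans
    (div_le_div_of_nonneg_right ?_ (by positivity))
  have hq : (q' : ℝ) + 1 ≤ q := by exact_mod_cast hq'
  have hq1 : (1 : ℝ) ≤ q := by linarith [(q'.cast_nonneg : (0 : ℝ) ≤ q')]
  have hq2 : (q' : ℝ) ^ 2 ≤ q ^ 2 := pow_le_pow_left₀ q'.cast_nonneg (by linarith) 2
  have hq3 : (q : ℝ) ^ 2 ≤ q ^ 3 := pow_le_pow_right₀ hq1 (by norm_num)
  have hq3' : 1 ≤ (q : ℝ) ^ 3 := one_le_pow₀ hq1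
  have hn : (1 : ℝ) ≤ n + 1 := by linarith [(n.cast_nonneg : (0 : ℝ) ≤ n)]
  calc 2 + 16 * (q' : ℝ) ^ 2 ≤ 18 * (q : ℝ) ^ 3 := by linarith
    _ ≤ 1828 * (q : ℝ) ^ 3 * ((n : ℝ) + 1) := by nlinarith

/-- Double-sided zero search; Unruh's conjecture.  Let `1 ≤ c ≤ 2n`.
Any quantum query algorithm making fewer than `q` queries to a random permutation of
`{0,1}^{2n}` and its inverse outputs `x ∈ {0,1}^{2n−c}` with `π(x‖0^c) = y‖0^c` for some
`y ∈ {0,1}^{2n−c}` with average probability at most `1828 q³ (n+1)/2^c`.  (For `c = n`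
this is Unruh's double-sided zero-search conjecture.) -/
theorem stmt19 {n c : ℕ} (hn : 1 ≤ n) (hc1 : 1 ≤ c) (hc2 : c ≤ 2 * n)
    (q q' : ℕ) (hq : 1 ≤ q) (hq' : q' < q) (A : QueryAlg (2 * n) q') :
    (∑ π : Equiv.Perm (Fin (2 * n) → Bool),
        ∑ x ∈ Finset.univ.filter
            (fun x : Fin (2 * n - c) → Bool =>
              ∃ y : Fin (2 * n - c) → Bool,
                π (padZ hc2 x fun _ => false) = padZ hc2 y fun _ => false),
          outProbPrefix hc2 A π x) / (((2 ^ (2 * n) : ℕ).factorial : ℝ))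
      ≤ 1828 * (q : ℝ) ^ 3 * ((n : ℝ) + 1) / (2 : ℝ) ^ c :=
  stmt19_general hc2 q q' hq' A
end
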